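/- The single-hop BER function p(γ) = (1/2)(1 − √(γ/(1+γ))) is convex on (0, ∞). -/
import Mathlib

private lemma frac_concave : ConcaveOn ℝ (Set.Ioi (0:ℝ)) (fun x : ℝ => x / (x + 1)) := by
  constructor
  · exact convex_Ioi 0
  · intro x hx y hy a b ha hb hab
    simp only [smul_eq_mul] at *
    have hx0 : (0:ℝ) < x := hx
    have hy0 : (0:ℝ) < y := hy
    have hx1 : (0:ℝ) < x + 1 := by linarith
    have hy1 : (0:ℝ) < y + 1 := by linarith
    have hz1 : (0:ℝ) < a * x + b * y + 1 := by positivity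
    rw [show a * (x / (x + 1)) = a * x / (x + 1) by ring,
      show b * (y / (y + 1)) = b * y / (y + 1) by ring,
      div_add_div _ _ (ne_of_gt hx1) (ne_of_gt hy1), div_le_div_iff₀ (by positivity) hz1]
    have hb' : b = 1 - a := by linarith
    subst hb'
    nlinarith [mul_nonneg (mul_nonneg ha hb) (sq_nonneg (x - y))]

private lemma sqrt_frac_concave :
    ConcaveOn ℝ (Set.Ioi (0:ℝ)) (fun x : ℝ => Real.sqrt (x / (x + 1))) := by
  constructor
  · exact convex_Ioi 0
  · intro x hx y hy a b ha hb hab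
    have hx0 : (0:ℝ) < x := hx
    have hy0 : (0:ℝ) < y := hy
    have hxm : x / (x + 1) ∈ Set.Ici (0:ℝ) := by
      have : (0:ℝ) ≤ x / (x + 1) := by positivity
      simpa using this
    have hym : y / (y + 1) ∈ Set.Ici (0:ℝ) := by
      have : (0:ℝ) ≤ y / (y + 1) := by positivity
      simpa using this
    have h1 := frac_concave.2 hx hy ha hb hab
    have h2 := Real.strictConcaveOn_sqrt.concaveOn.2 hxm hym ha hb hab
    have h3 : Real.sqrt (a • (x / (x + 1)) + b • (y / (y + 1))) ≤
        Real.sqrt ((a • x + b • y) / (a • x + b • y + 1)) := Real.sqrt_le_sqrt h1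
    calc a • Real.sqrt (x / (x + 1)) + b • Real.sqrt (y / (y + 1))
        ≤ Real.sqrt (a • (x / (x + 1)) + b • (y / (y + 1))) := h2
      _ ≤ _ := h3

/-- The single-hop BER function `p(γ) = (1/2)(1 - √(γ/(γ+1)))` is convex on
`(0, ∞)`. -/
theorem single_hop_ber_convex :
    ConvexOn ℝ (Set.Ioi (0 : ℝ))
      (fun γ : ℝ => (1 / 2) * (1 - Real.sqrt (γ / (γ + 1)))) := by
  have h := ((sqrt_frac_concave.smul (by norm_num : (0:ℝ) ≤ 1/2)).neg).add_const (1/2)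
  have heq : (fun γ : ℝ => (1 / 2) * (1 - Real.sqrt (γ / (γ + 1)))) =
      ((-fun x : ℝ => (1/2 : ℝ) • Real.sqrt (x / (x + 1))) + fun _ => (1/2 : ℝ)) := by
    funext γ
    simp only [Pi.add_apply, Pi.neg_apply, smul_eq_mul]
    ring
  rw [heq]
  exact h
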